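/- arXiv:2304.11349 — 2 statements merged into one kernel-verified Lean document; each statement's English description precedes it below -/
import Mathlib

section
/- The vector field R(x) = ξ(‖x‖)·x satisfies the pointwise bound ‖R(x)‖ ≤ 1/(d · ‖x‖^{d−1}) for every x ≠ 0, and R(x) = 0 whenever ‖x‖ ≥ 1; consequently R is integrable on ℝ^d. -/
open Metric MeasureTheory
open scoped RealInnerProductSpace

open Set in
lemma my_lintegral_fun_norm_addHaar {E : Type*} [NormedAddCommGroup E] [NormedSpace ℝ E]
    [MeasurableSpace E] [BorelSpace E] [FiniteDimensional ℝ E] [Nontrivial E]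
    (μ : Measure E) [μ.IsAddHaarMeasure] (G : ℝ → ENNReal) (hG : Measurable G) :
    ∫⁻ x, G ‖x‖ ∂μ
      = μ.toSphere univ *
        ∫⁻ r, G r.1 ∂(MeasureTheory.Measure.volumeIoiPow (Module.finrank ℝ E - 1)) := by
  have hGm : Measurable fun p : sphere (0:E) 1 × Ioi (0:ℝ) => G p.2.1 :=
    hG.comp (measurable_subtype_coe.comp measurable_snd)
  have h1 : ∫⁻ x : ({0}ᶜ : Set E), G ‖x.1‖ ∂(μ.comap Subtype.val) = ∫⁻ x, G ‖x‖ ∂μ := by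
    rw [lintegral_subtype_comap (measurableSet_singleton (0:E)).compl (fun x => G ‖x‖),
      MeasureTheory.restrict_compl_singleton]
  have h2 := (μ.measurePreserving_homeomorphUnitSphereProd).lintegral_comp
      (f := fun p : sphere (0:E) 1 × Ioi (0:ℝ) => G p.2.1) hGm
  simp only [homeomorphUnitSphereProd_apply_snd_coe] at h2
  rw [← h1, h2, lintegral_prod _ hGm.aemeasurable]
  simp only []
  rw [lintegral_const, mul_comm]

/-- The vector field `R x = ξ(‖x‖) • x` satisfies the pointwise
bound `‖R x‖ ≤ 1/(d ‖x‖^(d-1))` for `x ≠ 0`, vanishes for `‖x‖ ≥ 1`, and is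
integrable on `ℝ^d`. -/
theorem bound_and_integrability_of_R (d : ℕ) (hd : 2 ≤ d)
    (ρ : EuclideanSpace ℝ (Fin d) → ℝ) (hρ_smooth : ContDiff ℝ (⊤ : ℕ∞) ρ)
    (hρ_nonneg : ∀ x, 0 ≤ ρ x) (hρ_le_one : ∀ x, ρ x ≤ 1)
    (ρbar : ℝ → ℝ) (hρ_radial : ∀ x, ρ x = ρbar ‖x‖)
    (hρ_supp : tsupport ρ ⊆ closedBall 0 1)
    (hρ_int : ∫ x, ρ x = 1)
    (ξ : ℝ → ℝ)
    (hξ : ∀ t : ℝ, 0 < t → ξ t = (t ^ d)⁻¹ * ∫ s in t..1, s ^ (d - 1) * ρbar s)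
    (R : EuclideanSpace ℝ (Fin d) → EuclideanSpace ℝ (Fin d))
    (hR : ∀ x, R x = ξ ‖x‖ • x) :
    (∀ x : EuclideanSpace ℝ (Fin d), x ≠ 0 →
        ‖R x‖ ≤ 1 / (d * ‖x‖ ^ (d - 1))) ∧
    (∀ x : EuclideanSpace ℝ (Fin d), 1 ≤ ‖x‖ → R x = 0) ∧
    Integrable R := by
  have hd1 : (1:ℕ) ≤ d := by omega
  have hd0 : (0:ℝ) < d := Nat.cast_pos.mpr (by omega)
  have hm : d - 1 + 1 = d := by omega
  -- a fixed unit vector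
  set e : EuclideanSpace ℝ (Fin d) := EuclideanSpace.single ⟨0, by omega⟩ (1:ℝ) with he_def
  have he : ‖e‖ = 1 := by simp [he_def]
  have he0 : e ≠ 0 := by
    intro h; rw [h, norm_zero] at he; exact one_ne_zero he.symm
  -- the radial profile as a continuous function
  set f : ℝ → ℝ := fun s => ρ (s • e) with hf_def
  have hf_cont : Continuous f := hρ_smooth.continuous.comp (continuous_id.smul continuous_const)
  have hfs : ∀ s : ℝ, 0 ≤ s → ρbar s = f s := by
    intro s hs
    rw [hf_def]
    simp only
    rw [hρ_radial (s • e), norm_smul, he, Real.norm_eq_abs, abs_of_nonneg hs, mul_one]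
  have hf0 : ∀ s : ℝ, 1 < s → f s = 0 := by
    intro s hs
    show ρ (s • e) = 0
    apply image_eq_zero_of_notMem_tsupport
    intro hmem
    have := hρ_supp hmem
    rw [mem_closedBall_zero_iff, norm_smul, he, Real.norm_eq_abs,
      abs_of_pos (by linarith), mul_one] at this
    linarith
  have hf_nonneg : ∀ s : ℝ, 0 ≤ f s := fun s => hρ_nonneg _
  have hf_le_one : ∀ s : ℝ, f s ≤ 1 := fun s => hρ_le_one _
  have hint : ∀ a b : ℝ, IntervalIntegrable (fun s => s ^ (d-1) * f s) volume a b :=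
    fun a b => ((continuous_pow _).mul hf_cont).intervalIntegrable a b
  -- ξ vanishes for t ≥ 1
  have hzero : ∀ t : ℝ, 1 ≤ t → ξ t = 0 := by
    intro t ht
    rw [hξ t (by linarith)]
    rcases eq_or_lt_of_le ht with h | h
    · rw [← h, intervalIntegral.integral_same, mul_zero]
    · have : (∫ s in t..1, s ^ (d-1) * ρbar s) = ∫ s in t..1, (0:ℝ) := by
        apply intervalIntegral.integral_congr_ae
        filter_upwards with s hs
        rw [Set.mem_uIoc] at hs
        have hs1 : 1 < s := by rcases hs with ⟨h1, h2⟩ | ⟨h1, h2⟩ <;> linarith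
        rw [hfs s (by linarith), hf0 s hs1, mul_zero]
      rw [this, intervalIntegral.integral_zero, mul_zero]
  have part2 : ∀ x : EuclideanSpace ℝ (Fin d), 1 ≤ ‖x‖ → R x = 0 := by
    intro x hx
    rw [hR, hzero ‖x‖ hx, zero_smul]
  -- Part 1 : the pointwise bound
  have part1 : ∀ x : EuclideanSpace ℝ (Fin d), x ≠ 0 →
      ‖R x‖ ≤ 1 / (d * ‖x‖ ^ (d - 1)) := by
    intro x hx
    have ht : 0 < ‖x‖ := norm_pos_iff.2 hx
    have hrhs : 0 < (d:ℝ) * ‖x‖ ^ (d-1) := mul_pos hd0 (pow_pos ht _)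
    by_cases h1 : 1 ≤ ‖x‖
    · rw [part2 x h1, norm_zero]
      positivity
    · push_neg at h1
      set t : ℝ := ‖x‖ with htdef
      rw [hR, norm_smul, Real.norm_eq_abs]
      have hξt := hξ t ht
      have hIc : (∫ s in t..1, s ^ (d-1) * ρbar s) = ∫ s in t..1, s ^ (d-1) * f s := by
        apply intervalIntegral.integral_congr
        intro s hs
        rw [Set.uIcc_of_le h1.le] at hs
        simp only
        rw [hfs s (le_trans ht.le hs.1)]
      have h0I : 0 ≤ ∫ s in t..1, s ^ (d-1) * f s :=
        intervalIntegral.integral_nonneg h1.le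
          (fun u hu => mul_nonneg (pow_nonneg (le_trans ht.le hu.1) _) (hf_nonneg u))
      have hIle : (∫ s in t..1, s ^ (d-1) * f s) ≤ ∫ s in t..1, s ^ (d-1) := by
        apply intervalIntegral.integral_mono_on h1.le (hint t 1)
          ((continuous_pow _).intervalIntegrable t 1)
        intro u hu
        have hu0 : 0 ≤ u := le_trans ht.le hu.1
        calc u ^ (d-1) * f u ≤ u ^ (d-1) * 1 :=
              mul_le_mul_of_nonneg_left (hf_le_one u) (pow_nonneg hu0 _)
          _ = u ^ (d-1) := mul_one _
      have hpowint : (∫ s in t..1, s ^ (d-1)) ≤ 1 / d := by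
        rw [integral_pow, hm]
        have hcast : ((d - 1 : ℕ) : ℝ) + 1 = (d : ℝ) := by
          rw [Nat.cast_sub hd1]; push_cast; ring
        rw [hcast]
        have h2 : (0:ℝ) ≤ t ^ d := pow_nonneg ht.le _
        rw [one_pow, div_le_div_iff₀ hd0 hd0]
        nlinarith
      have hIabs : |∫ s in t..1, s ^ (d-1) * ρbar s| ≤ 1 / d := by
        rw [hIc, abs_of_nonneg h0I]
        linarith
      rw [hξt, abs_mul, abs_inv, abs_pow, abs_of_pos ht]
      rw [le_div_iff₀ hrhs, ← htdef]
      have hkey : (t ^ d)⁻¹ * (t ^ (d-1) * t) = 1 := by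
        rw [← pow_succ, hm]
        exact inv_mul_cancel₀ (pow_ne_zero _ ht.ne')
      calc (t ^ d)⁻¹ * |∫ s in t..1, s ^ (d-1) * ρbar s| * t * ((d:ℝ) * t ^ (d-1))
          = (|∫ s in t..1, s ^ (d-1) * ρbar s| * d) * ((t ^ d)⁻¹ * (t ^ (d-1) * t)) := by
            ring
        _ = |∫ s in t..1, s ^ (d-1) * ρbar s| * d := by rw [hkey, mul_one]
        _ ≤ (1 / d) * d := mul_le_mul_of_nonneg_right hIabs hd0.le
        _ = 1 := by field_simp
  refine ⟨part1, part2, ?_⟩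
  -- Integrability
  haveI : Nontrivial (EuclideanSpace ℝ (Fin d)) := nontrivial_of_ne e 0 he0
  -- measurability of R
  have hH : Continuous fun t : ℝ => ∫ s in t..1, s ^ (d-1) * f s := by
    have h := intervalIntegral.continuous_primitive (fun a b => hint a b) 1
    have heq : (fun t : ℝ => ∫ s in t..1, s ^ (d-1) * f s)
        = fun t => -∫ s in (1:ℝ)..t, s ^ (d-1) * f s := by
      funext t; rw [intervalIntegral.integral_symm]
    rw [heq]; exact h.neg
  have hRF : R = fun x : EuclideanSpace ℝ (Fin d) =>
      ((‖x‖ ^ d)⁻¹ * ∫ s in ‖x‖..1, s ^ (d-1) * f s) • x := by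
    funext x
    rcases eq_or_ne x 0 with rfl | hx
    · rw [hR]; simp
    · have ht : 0 < ‖x‖ := norm_pos_iff.2 hx
      rw [hR, hξ ‖x‖ ht]
      congr 1
      congr 1
      apply intervalIntegral.integral_congr
      intro s hs
      have hs0 : 0 < s := by
        rw [Set.mem_uIcc] at hs
        rcases hs with ⟨h1, _⟩ | ⟨h1, _⟩ <;> linarith
      simp only
      rw [hfs s hs0.le]
  have hRmeas : Measurable R := by
    rw [hRF]
    apply Measurable.fun_smul _ measurable_id
    exact (((continuous_norm.pow d).measurable).inv).mul
      ((hH.comp continuous_norm).measurable)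
  -- the dominating radial function
  set G : ℝ → ENNReal := fun r =>
    (Set.Ioc (0:ℝ) 1).indicator (fun r => ENNReal.ofReal (((d:ℝ) * r ^ (d-1))⁻¹)) r with hG_def
  have hGmeas : Measurable G := by
    apply Measurable.indicator _ measurableSet_Ioc
    exact ENNReal.measurable_ofReal.comp (((measurable_id.pow_const (d-1)).const_mul _).inv)
  have hpt : ∀ x : EuclideanSpace ℝ (Fin d), (‖R x‖₊ : ENNReal) ≤ G ‖x‖ := by
    intro x
    rcases eq_or_ne x 0 with rfl | hx
    · rw [hR]; simp
    · have ht : 0 < ‖x‖ := norm_pos_iff.2 hx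
      by_cases h1 : ‖x‖ ≤ 1
      · have hGx : G ‖x‖ = ENNReal.ofReal (((d:ℝ) * ‖x‖ ^ (d-1))⁻¹) :=
          Set.indicator_of_mem (Set.mem_Ioc.mpr ⟨ht, h1⟩) _
        rw [hGx, show (‖R x‖₊ : ENNReal) = ENNReal.ofReal ‖R x‖ from (ofReal_norm _).symm]
        apply ENNReal.ofReal_le_ofReal
        rw [← one_div]
        exact part1 x hx
      · rw [part2 x (le_of_not_ge h1)]
        simp
  have hfin : ∫⁻ x : EuclideanSpace ℝ (Fin d), G ‖x‖ < ⊤ := by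
    rw [my_lintegral_fun_norm_addHaar volume G hGmeas]
    apply ENNReal.mul_lt_top (measure_lt_top _ _)
    have hdim : Module.finrank ℝ (EuclideanSpace ℝ (Fin d)) = d := finrank_euclideanSpace_fin
    rw [hdim, Measure.volumeIoiPow]
    rw [lintegral_withDensity_eq_lintegral_mul (Measure.comap Subtype.val volume)
      (f := fun r : Set.Ioi (0:ℝ) => ENNReal.ofReal (r.1 ^ (d-1)))
      (Measurable.ennreal_ofReal (measurable_subtype_coe.pow_const (d-1)))
      (g := fun r : Set.Ioi (0:ℝ) => G r.1)
      (hGmeas.comp measurable_subtype_coe)]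
    have heq2 : ∫⁻ r : Set.Ioi (0:ℝ),
        ((fun r : Set.Ioi (0:ℝ) => ENNReal.ofReal (r.1 ^ (d-1))) *
          fun r : Set.Ioi (0:ℝ) => G r.1) r ∂(Measure.comap Subtype.val volume)
        = ∫⁻ r in Set.Ioi (0:ℝ), ENNReal.ofReal (r ^ (d-1)) * G r := by
      exact lintegral_subtype_comap measurableSet_Ioi
        (fun r => ENNReal.ofReal (r ^ (d-1)) * G r)
    rw [heq2]
    have hbd : ∀ r : ℝ, ENNReal.ofReal (r ^ (d-1)) * G r
        ≤ (Set.Ioc (0:ℝ) 1).indicator (fun _ => ENNReal.ofReal ((d:ℝ)⁻¹)) r := by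
      intro r
      by_cases hr : r ∈ Set.Ioc (0:ℝ) 1
      · rw [hG_def]
        simp only [Set.indicator_of_mem hr]
        rw [← ENNReal.ofReal_mul (pow_nonneg hr.1.le _)]
        apply ENNReal.ofReal_le_ofReal
        have hrpow : (0:ℝ) < r ^ (d-1) := pow_pos hr.1 _
        rw [mul_inv, ← mul_assoc, mul_comm (r ^ (d-1)) ((d:ℝ))⁻¹, mul_assoc,
          mul_inv_cancel₀ hrpow.ne']
        simp
      · rw [hG_def]
        simp only [Set.indicator_of_notMem hr, mul_zero, le_refl]
    calc ∫⁻ r in Set.Ioi (0:ℝ), ENNReal.ofReal (r ^ (d-1)) * G r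
        ≤ ∫⁻ r in Set.Ioi (0:ℝ),
            (Set.Ioc (0:ℝ) 1).indicator (fun _ => ENNReal.ofReal ((d:ℝ)⁻¹)) r :=
          lintegral_mono hbd
      _ ≤ ∫⁻ r, (Set.Ioc (0:ℝ) 1).indicator (fun _ => ENNReal.ofReal ((d:ℝ)⁻¹)) r :=
          setLIntegral_le_lintegral _ _
      _ = ENNReal.ofReal ((d:ℝ)⁻¹) * volume (Set.Ioc (0:ℝ) 1) := by
          rw [lintegral_indicator measurableSet_Ioc, setLIntegral_const]
      _ < ⊤ := ENNReal.mul_lt_top ENNReal.ofReal_lt_top (measure_Ioc_lt_top)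
  exact ⟨hRmeas.aestronglyMeasurable,
    lt_of_le_of_lt (lintegral_mono hpt) hfin⟩
end

section
/- Let u = (u_1, …, u_k) ∈ ℂ^k satisfy |u_m| = 1 for every m, and let A : ℝ^d → ℂ^k be an ℝ-linear map such that Re( conj(u_m) · (A e)_m ) = 0 for every index m and every e ∈ ℝ^d. Define the ℝ-linear map B : ℝ^d → ℝ^k by (B e)_m := Re( conj(i u_m) · (A e)_m ). Then for every 1 ≤ p < ∞ the nuclear norms agree: ν_p^ℂ(A) = ν_p^ℝ(B). (This is the pointwise linear-algebra content of the identity |∇u(x)|_{nucl,p} = |⋆ j u(x)|_{mass,p} for torus-valued Sobolev maps u, applied at a point of differentiability.) -/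
/-!
The hypothesis on `A` says that each coordinate `(A e)_m` lies on the real line `ℝ · w_m`,
`w_m = i u_m`. Hence `A = S ∘ B` for the coordinatewise isometric embedding
`S z = (w_m z_m)_m`, and `B = T ∘ A` for the coordinatewise orthogonal projection
`T ζ = (Re(conj w_m ζ_m))_m` onto these lines. Both `S` and `T` are contractions for `‖·‖_p`,
and pushing a nuclear decomposition of a map through an `ℓ^p`-contraction gives a
decomposition of the composite of no larger cost. So `ν_p^ℂ(A) ≤ ν_p^ℝ(B) ≤ ν_p^ℂ(A)`.
-/

open Finset
open scoped RealInnerProductSpace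

/-- The `p`-nuclear norm of an ℝ-linear map `A : ℝ^d → ℂ^k`:
the infimum of `∑ i ‖ζ i‖_p ‖v i‖` over all finite decompositions
`A e = ∑ i ⟪v i, e⟫ • ζ i`, where `‖ζ‖_p = (∑ j |ζ j|^p)^(1/p)` with `|·|`
the complex modulus. -/
noncomputable def nuclearNormC (d k : ℕ) (p : ℝ)
    (A : EuclideanSpace ℝ (Fin d) →ₗ[ℝ] (Fin k → ℂ)) : ℝ :=
  sInf { s : ℝ | ∃ (l : ℕ) (z : Fin l → Fin k → ℂ)
      (v : Fin l → EuclideanSpace ℝ (Fin d)),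
    (∀ e, A e = ∑ i, ⟪v i, e⟫ • z i) ∧
    s = ∑ i, (∑ j, ‖z i j‖ ^ p) ^ (1 / p) * ‖v i‖ }

/-- The `p`-nuclear norm of a linear map `B : ℝ^d → ℝ^k`. -/
noncomputable def nuclearNormR (d k : ℕ) (p : ℝ)
    (B : EuclideanSpace ℝ (Fin d) →ₗ[ℝ] (Fin k → ℝ)) : ℝ :=
  sInf { s : ℝ | ∃ (l : ℕ) (z : Fin l → Fin k → ℝ)
      (v : Fin l → EuclideanSpace ℝ (Fin d)),
    (∀ e, B e = ∑ i, ⟪v i, e⟫ • z i) ∧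
    s = ∑ i, (∑ j, |z i j| ^ p) ^ (1 / p) * ‖v i‖ }

theorem LinearMap.apply_eq_sum_inner_single_smul {d : ℕ} {F : Type*} [AddCommGroup F]
    [Module ℝ F] (f : EuclideanSpace ℝ (Fin d) →ₗ[ℝ] F) (e : EuclideanSpace ℝ (Fin d)) :
    f e = ∑ i, ⟪EuclideanSpace.single i (1 : ℝ), e⟫ • f (EuclideanSpace.single i 1) := by
  conv_lhs => rw [← (EuclideanSpace.basisFun (Fin d) ℝ).sum_repr e]
  simp [EuclideanSpace.inner_single_left]

theorem rpow_sum_rpow_le_rpow_sum_rpow {ι : Type*} (s : Finset ι) {p : ℝ} (hp : 0 ≤ p)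
    {f g : ι → ℝ} (hf : ∀ i ∈ s, 0 ≤ f i) (hfg : ∀ i ∈ s, f i ≤ g i) :
    (∑ i ∈ s, f i ^ p) ^ (1 / p) ≤ (∑ i ∈ s, g i ^ p) ^ (1 / p) := by
  gcongr with i hi
  · exact sum_nonneg fun i hi => Real.rpow_nonneg (hf i hi) p
  · exact hf i hi
  · exact hfg i hi

section NuclearNorm

variable {d k : ℕ} {p : ℝ}

theorem nuclearNormC_le (A : EuclideanSpace ℝ (Fin d) →ₗ[ℝ] (Fin k → ℂ)) {l : ℕ}
    (z : Fin l → Fin k → ℂ) (v : Fin l → EuclideanSpace ℝ (Fin d))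
    (h : ∀ e, A e = ∑ i, ⟪v i, e⟫ • z i) :
    nuclearNormC d k p A ≤ ∑ i, (∑ j, ‖z i j‖ ^ p) ^ (1 / p) * ‖v i‖ := by
  refine csInf_le ⟨0, ?_⟩ ⟨l, z, v, h, rfl⟩
  rintro s ⟨l, z, v, -, rfl⟩
  positivity

theorem nuclearNormR_le (B : EuclideanSpace ℝ (Fin d) →ₗ[ℝ] (Fin k → ℝ)) {l : ℕ}
    (z : Fin l → Fin k → ℝ) (v : Fin l → EuclideanSpace ℝ (Fin d))
    (h : ∀ e, B e = ∑ i, ⟪v i, e⟫ • z i) :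
    nuclearNormR d k p B ≤ ∑ i, (∑ j, |z i j| ^ p) ^ (1 / p) * ‖v i‖ := by
  refine csInf_le ⟨0, ?_⟩ ⟨l, z, v, h, rfl⟩
  rintro s ⟨l, z, v, -, rfl⟩
  positivity

theorem le_nuclearNormC (A : EuclideanSpace ℝ (Fin d) →ₗ[ℝ] (Fin k → ℂ)) {c : ℝ}
    (h : ∀ (l : ℕ) (z : Fin l → Fin k → ℂ) (v : Fin l → EuclideanSpace ℝ (Fin d)),
      (∀ e, A e = ∑ i, ⟪v i, e⟫ • z i) → c ≤ ∑ i, (∑ j, ‖z i j‖ ^ p) ^ (1 / p) * ‖v i‖) :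
    c ≤ nuclearNormC d k p A := by
  refine le_csInf ⟨_, d, _, _, A.apply_eq_sum_inner_single_smul, rfl⟩ ?_
  rintro s ⟨l, z, v, hdec, rfl⟩
  exact h l z v hdec

theorem le_nuclearNormR (B : EuclideanSpace ℝ (Fin d) →ₗ[ℝ] (Fin k → ℝ)) {c : ℝ}
    (h : ∀ (l : ℕ) (z : Fin l → Fin k → ℝ) (v : Fin l → EuclideanSpace ℝ (Fin d)),
      (∀ e, B e = ∑ i, ⟪v i, e⟫ • z i) → c ≤ ∑ i, (∑ j, |z i j| ^ p) ^ (1 / p) * ‖v i‖) :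
    c ≤ nuclearNormR d k p B := by
  refine le_csInf ⟨_, d, _, _, B.apply_eq_sum_inner_single_smul, rfl⟩ ?_
  rintro s ⟨l, z, v, hdec, rfl⟩
  exact h l z v hdec

theorem nuclearNormR_comp_le (T : (Fin k → ℂ) →ₗ[ℝ] (Fin k → ℝ))
    (hT : ∀ ζ, (∑ j, |T ζ j| ^ p) ^ (1 / p) ≤ (∑ j, ‖ζ j‖ ^ p) ^ (1 / p))
    (A : EuclideanSpace ℝ (Fin d) →ₗ[ℝ] (Fin k → ℂ)) :
    nuclearNormR d k p (T ∘ₗ A) ≤ nuclearNormC d k p A := by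
  refine le_nuclearNormC A fun l ζ v hdec => ?_
  refine (nuclearNormR_le _ (fun i => T (ζ i)) v fun e => ?_).trans ?_
  · simp [hdec e]
  · exact sum_le_sum fun i _ => mul_le_mul_of_nonneg_right (hT (ζ i)) (norm_nonneg _)

theorem nuclearNormC_comp_le (S : (Fin k → ℝ) →ₗ[ℝ] (Fin k → ℂ))
    (hS : ∀ z, (∑ j, ‖S z j‖ ^ p) ^ (1 / p) ≤ (∑ j, |z j| ^ p) ^ (1 / p))
    (B : EuclideanSpace ℝ (Fin d) →ₗ[ℝ] (Fin k → ℝ)) :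
    nuclearNormC d k p (S ∘ₗ B) ≤ nuclearNormR d k p B := by
  refine le_nuclearNormR B fun l z v hdec => ?_
  refine (nuclearNormC_le _ (fun i => S (z i)) v fun e => ?_).trans ?_
  · simp [hdec e]
  · exact sum_le_sum fun i _ => mul_le_mul_of_nonneg_right (hS (z i)) (norm_nonneg _)

end NuclearNorm

section Lines

variable {k : ℕ} (w : Fin k → ℂ)

def lineEmbed : (Fin k → ℝ) →ₗ[ℝ] (Fin k → ℂ) where
  toFun z j := w j * z j
  map_add' z z' := by ext j; simp [mul_add]
  map_smul' c z := by ext j; simp [mul_left_comm]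

def lineCoord : (Fin k → ℂ) →ₗ[ℝ] (Fin k → ℝ) where
  toFun ζ j := (starRingEnd ℂ (w j) * ζ j).re
  map_add' ζ ζ' := by ext j; simp [mul_add]
  map_smul' c ζ := by ext j; simp [mul_left_comm]

variable {w}

theorem norm_lineEmbed_apply (hw : ∀ j, ‖w j‖ = 1) (z : Fin k → ℝ) (j : Fin k) :
    ‖lineEmbed w z j‖ = |z j| := by
  simp [lineEmbed, hw j]

theorem abs_lineCoord_apply_le (hw : ∀ j, ‖w j‖ = 1) (ζ : Fin k → ℂ) (j : Fin k) :
    |lineCoord w ζ j| ≤ ‖ζ j‖ :=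
  (Complex.abs_re_le_norm _).trans (by simp [hw j])

theorem lineEmbed_lineCoord (hw : ∀ j, ‖w j‖ = 1) {ζ : Fin k → ℂ}
    (hζ : ∀ j, (starRingEnd ℂ (w j) * ζ j).im = 0) : lineEmbed w (lineCoord w ζ) = ζ := by
  ext1 j
  have hre : ((lineCoord w ζ j : ℝ) : ℂ) = starRingEnd ℂ (w j) * ζ j :=
    Complex.ext (by simp [lineCoord]) (by simp [hζ j])
  simp [lineEmbed, hre, ← mul_assoc, Complex.mul_conj, Complex.normSq_eq_norm_sq, hw j]

end Lines

theorem nuclearNorm_complex_eq_real_general (d k : ℕ)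
    (p : ℝ) (hp : 1 ≤ p)
    (u : Fin k → ℂ) (hu : ∀ m, ‖u m‖ = 1)
    (A : EuclideanSpace ℝ (Fin d) →ₗ[ℝ] (Fin k → ℂ))
    (hA : ∀ (m : Fin k) (e : EuclideanSpace ℝ (Fin d)),
      ((starRingEnd ℂ) (u m) * A e m).re = 0)
    (B : EuclideanSpace ℝ (Fin d) →ₗ[ℝ] (Fin k → ℝ))
    (hB : ∀ (e : EuclideanSpace ℝ (Fin d)) (m : Fin k),
      B e m = ((starRingEnd ℂ) (Complex.I * u m) * A e m).re) :
    nuclearNormC d k p A = nuclearNormR d k p B := by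
  set w : Fin k → ℂ := fun m => Complex.I * u m
  have hw : ∀ m, ‖w m‖ = 1 := fun m => by simp [w, hu m]
  have hBA : B = lineCoord w ∘ₗ A := LinearMap.ext fun e => funext (hB e)
  have hAB : A = lineEmbed w ∘ₗ B := by
    rw [hBA]
    ext1 e
    exact (lineEmbed_lineCoord hw fun m => by simp [w, mul_assoc, hA m e]).symm
  have hp0 : 0 ≤ p := zero_le_one.trans hp
  refine le_antisymm ?_ ?_
  · rw [hAB]
    exact nuclearNormC_comp_le _ (fun z => rpow_sum_rpow_le_rpow_sum_rpow _ hp0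
      (fun _ _ => norm_nonneg _) fun j _ => (norm_lineEmbed_apply hw z j).le) B
  · rw [hBA]
    exact nuclearNormR_comp_le _ (fun ζ => rpow_sum_rpow_le_rpow_sum_rpow _ hp0
      (fun _ _ => abs_nonneg _) fun j _ => abs_lineCoord_apply_le hw ζ j) A

/-- Let `u ∈ ℂ^k` with `|u_m| = 1` for all `m`, and let
`A : ℝ^d → ℂ^k` be ℝ-linear with `Re(conj u_m · (A e)_m) = 0` for all `m, e`.
Define `B : ℝ^d → ℝ^k` by `(B e)_m = Re(conj(i u_m) · (A e)_m)`. Then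
`ν_p^ℂ(A) = ν_p^ℝ(B)` for every `1 ≤ p < ∞`. -/
theorem nuclearNorm_complex_eq_real (d k : ℕ) (hd : 1 ≤ d) (hk : 1 ≤ k)
    (p : ℝ) (hp : 1 ≤ p)
    (u : Fin k → ℂ) (hu : ∀ m, ‖u m‖ = 1)
    (A : EuclideanSpace ℝ (Fin d) →ₗ[ℝ] (Fin k → ℂ))
    (hA : ∀ (m : Fin k) (e : EuclideanSpace ℝ (Fin d)),
      ((starRingEnd ℂ) (u m) * A e m).re = 0)
    (B : EuclideanSpace ℝ (Fin d) →ₗ[ℝ] (Fin k → ℝ))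
    (hB : ∀ (e : EuclideanSpace ℝ (Fin d)) (m : Fin k),
      B e m = ((starRingEnd ℂ) (Complex.I * u m) * A e m).re) :
    nuclearNormC d k p A = nuclearNormR d k p B :=
  nuclearNorm_complex_eq_real_general d k p hp u hu A hA B hB
end
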